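/- Suppose the coefficients satisfy the symmetry condition a_{i₁,i₂,i₃,μ₁,μ₂,μ₃} = a_{i₂,i₁,i₃,μ₂,μ₁,μ₃} and the cancellation condition ∑_{σ ∈ Sym({1,2,3})} a_{i_{σ(1)},i_{σ(2)},i_{σ(3)},μ_{σ(1)},μ_{σ(2)},μ_{σ(3)}} = 0 for every choice of i₁,i₂,i₃ ∈ {1,2,3,4} and (μ₁,μ₂,μ₃) ∈ S (note that S is invariant under permutations of coordinates, so every permuted triple again lies in S). Then for every Schwartz vector field u : ℝ³ → ℝ³ the triple series ∑_{n∈ℤ} ∑_{i₁,i₂,i₃ ∈ {1,2,3,4}} ∑_{(μ₁,μ₂,μ₃) ∈ S} a_{i₁,i₂,i₃,μ₁,μ₂,μ₃} λ^{5n/2} ⟨u, ψ_{i₁,n+μ₁}⟩ ⟨u, ψ_{i₂,n+μ₂}⟩ ⟨u, ψ_{i₃,n+μ₃}⟩ converges absolutely and its sum equals 0; that is, the local cascade operator C defined by these data satisfies the cancellation identity ⟨C(u,u), u⟩ = 0. -/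

import Mathlib

open MeasureTheory
open scoped RealInnerProductSpace FourierTransform ENNReal

/-- The `L²`-normalized rescaling `f_n(x) = λ^{3n/2} f(λⁿ x)` of a vector field on `ℝ³`. -/
noncomputable def rescaleL2 (l : ℝ) (n : ℤ)
    (f : EuclideanSpace ℝ (Fin 3) → EuclideanSpace ℝ (Fin 3)) :
    EuclideanSpace ℝ (Fin 3) → EuclideanSpace ℝ (Fin 3) :=
  fun x => (l ^ ((3 * (n : ℝ)) / 2)) • f ((l ^ (n : ℝ)) • x)

/-- The `L²` pairing of two vector fields on `ℝ³`. -/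
noncomputable def pairingL2 (u w : EuclideanSpace ℝ (Fin 3) → EuclideanSpace ℝ (Fin 3)) : ℝ :=
  ∫ x, ⟪u x, w x⟫

/-- The index set `S = {(0,0,0), (1,0,0), (0,1,0), (0,0,1)} ⊂ ℤ³`. -/
def cascadeS : Finset (ℤ × ℤ × ℤ) := {(0, 0, 0), (1, 0, 0), (0, 1, 0), (0, 0, 1)}

/-!
For fixed `n` the inner finite sum vanishes: writing an index as a pair `(i, μ)` of functions on
the three slots, the index set is stable under permuting the slots, and summing the summand over
the orbit of `(i, μ)` gives the cancellation sum of `a` times the permutation-invariant product of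
the three pairings.

Absolute convergence comes from `|⟨u, ψ_{i,m}⟩| ≲ λ^{-3|m|/2}`: put the sup norm on one factor and
the `L¹` norm on the other, and note that `ψ_{i,m}` has sup norm `λ^{3m/2} ‖ψᵢ‖_∞` and `L¹` norm
`λ^{-3m/2} ‖ψᵢ‖_{L¹}`. The `n`-th term is then `O(λ^{5n/2 - 9|n|/2}) = O(λ^{-2|n|})`.
-/

open Asymptotics Filter

local notation "E3" => EuclideanSpace ℝ (Fin 3)

theorem Finset.sum_eq_zero_of_sum_smul_eq_zero {G X M : Type*} [Group G] [Fintype G]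
    [MulAction G X] [AddCommMonoid M] [IsAddTorsionFree M] {s : Finset X}
    (hs : ∀ g : G, ∀ x ∈ s, g • x ∈ s) {f : X → M} (h : ∀ x ∈ s, ∑ g : G, f (g • x) = 0) :
    ∑ x ∈ s, f x = 0 := by
  have hinv (g : G) : ∑ x ∈ s, f (g • x) = ∑ x ∈ s, f x :=
    Finset.sum_nbij' (g • ·) (g⁻¹ • ·) (hs g) (hs g⁻¹) (by simp) (by simp) (fun _ _ => rfl)
  apply nsmul_right_injective (Fintype.card_ne_zero (α := G))
  calc Fintype.card G • ∑ x ∈ s, f x = ∑ g : G, ∑ x ∈ s, f (g • x) := by simp [hinv]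
    _ = ∑ x ∈ s, ∑ g : G, f (g • x) := Finset.sum_comm
    _ = Fintype.card G • 0 := by simp [Finset.sum_eq_zero h]

def finThreeArrowEquiv (α : Type*) : (Fin 3 → α) ≃ α × α × α where
  toFun i := (i 0, i 1, i 2)
  invFun p := ![p.1, p.2.1, p.2.2]
  left_inv i := by ext k; fin_cases k <;> rfl
  right_inv _ := rfl

def cascadeShifts : Finset (Fin 3 → ℤ) := cascadeS.map (finThreeArrowEquiv ℤ).symm.toEmbedding

attribute [local instance] arrowAction

theorem Equiv.Perm.inv_smul_arrow_apply {α β : Type*} (σ : Equiv.Perm α) (f : α → β) (k : α) :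
    (σ⁻¹ • f) k = f (σ k) :=
  rfl

theorem perm_smul_mem_cascadeShifts :
    ∀ σ : Equiv.Perm (Fin 3), ∀ ν ∈ cascadeShifts, σ • ν ∈ cascadeShifts := by
  decide

theorem sum_cascade_eq_zero {ι : Type*} [Fintype ι] (a : ι → ι → ι → ℤ × ℤ × ℤ → ℝ)
    (hcancel : ∀ (i : Fin 3 → ι) (μ : Fin 3 → ℤ), (μ 0, μ 1, μ 2) ∈ cascadeS →
      (∑ σ : Equiv.Perm (Fin 3),
        a (i (σ 0)) (i (σ 1)) (i (σ 2)) (μ (σ 0), μ (σ 1), μ (σ 2))) = 0)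
    (P : ι → ℤ → ℝ) (c : ℝ) (n : ℤ) :
    ∑ i₁, ∑ i₂, ∑ i₃, ∑ μ ∈ cascadeS,
      a i₁ i₂ i₃ μ * c * P i₁ (n + μ.1) * P i₂ (n + μ.2.1) * P i₃ (n + μ.2.2) = 0 := by
  set F : (Fin 3 → ι) × (Fin 3 → ℤ) → ℝ := fun x =>
    a (x.1 0) (x.1 1) (x.1 2) (x.2 0, x.2 1, x.2 2) * c * ∏ k, P (x.1 k) (n + x.2 k)
  have hF : ∑ i₁, ∑ i₂, ∑ i₃, ∑ μ ∈ cascadeS,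
      a i₁ i₂ i₃ μ * c * P i₁ (n + μ.1) * P i₂ (n + μ.2.1) * P i₃ (n + μ.2.2)
      = ∑ x ∈ Finset.univ ×ˢ cascadeShifts, F x := by
    rw [Finset.sum_product, ← (finThreeArrowEquiv ι).symm.sum_comp]
    simp only [Fintype.sum_prod_type, cascadeShifts, Finset.sum_map, F, Fin.prod_univ_three,
      ← mul_assoc]
    rfl
  rw [hF]
  refine Finset.sum_eq_zero_of_sum_smul_eq_zero (G := Equiv.Perm (Fin 3)) ?_ fun x hx => ?_
  · rintro σ ⟨i, ν⟩ hx
    simp only [Finset.mem_product, Finset.mem_univ, true_and] at hx ⊢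
    exact perm_smul_mem_cascadeShifts σ ν hx
  · obtain ⟨i, ν⟩ := x
    have hν : (ν 0, ν 1, ν 2) ∈ cascadeS := by
      simp only [Finset.mem_product, Finset.mem_univ, true_and, cascadeShifts,
        Finset.mem_map_equiv] at hx
      exact hx
    rw [← Equiv.sum_comp (Equiv.inv (Equiv.Perm (Fin 3)))]
    calc ∑ σ : Equiv.Perm (Fin 3), F ((Equiv.inv _ σ) • (i, ν))
        = ∑ σ : Equiv.Perm (Fin 3), a (i (σ 0)) (i (σ 1)) (i (σ 2)) (ν (σ 0), ν (σ 1), ν (σ 2))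
            * c * ∏ k, P (i k) (n + ν k) := by
          refine Finset.sum_congr rfl fun σ _ => ?_
          simp only [F, Equiv.inv_apply, Prod.smul_mk, Equiv.Perm.inv_smul_arrow_apply]
          rw [Equiv.prod_comp σ fun k => P (i k) (n + ν k)]
      _ = 0 := by rw [← Finset.sum_mul, ← Finset.sum_mul, hcancel i ν hν, zero_mul, zero_mul]

theorem pairingL2_comm (u w : E3 → E3) : pairingL2 u w = pairingL2 w u := by
  simp only [pairingL2, real_inner_comm]

theorem abs_pairingL2_le_of_norm_le {u w : E3 → E3} (hu : Integrable u) {M : ℝ}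
    (hw : ∀ x, ‖w x‖ ≤ M) : |pairingL2 u w| ≤ M * ∫ x, ‖u x‖ := by
  rw [pairingL2, ← Real.norm_eq_abs, ← integral_const_mul]
  refine (norm_integral_le_integral_norm _).trans <| integral_mono_of_nonneg
    (.of_forall fun x => norm_nonneg _) (hu.norm.const_mul M) (.of_forall fun x => ?_)
  calc ‖⟪u x, w x⟫‖ ≤ ‖u x‖ * ‖w x‖ := norm_inner_le_norm _ _
    _ ≤ M * ‖u x‖ := by rw [mul_comm]; exact mul_le_mul_of_nonneg_right (hw x) (norm_nonneg _)

section Rescale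

variable {l : ℝ} {f : E3 → E3}

theorem norm_rescaleL2 (hl : 0 < l) (n : ℤ) (x : E3) :
    ‖rescaleL2 l n f x‖ = l ^ (3 * (n : ℝ) / 2) * ‖f (l ^ (n : ℝ) • x)‖ := by
  rw [rescaleL2, norm_smul, Real.norm_of_nonneg (Real.rpow_nonneg hl.le _)]

theorem norm_rescaleL2_le (hl : 0 < l) (n : ℤ) {M : ℝ} (hf : ∀ x, ‖f x‖ ≤ M) (x : E3) :
    ‖rescaleL2 l n f x‖ ≤ l ^ (3 * (n : ℝ) / 2) * M := by
  rw [norm_rescaleL2 hl]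
  exact mul_le_mul_of_nonneg_left (hf _) (Real.rpow_nonneg hl.le _)

theorem integrable_rescaleL2 (hl : 0 < l) (n : ℤ) (hf : Integrable f) :
    Integrable (rescaleL2 l n f) :=
  (hf.comp_smul (Real.rpow_pos_of_pos hl (n : ℝ)).ne').smul (l ^ (3 * (n : ℝ) / 2))

theorem integral_norm_rescaleL2 (hl : 0 < l) (n : ℤ) :
    ∫ x, ‖rescaleL2 l n f x‖ = l ^ (-(3 * (n : ℝ)) / 2) * ∫ x, ‖f x‖ := by
  simp_rw [norm_rescaleL2 hl]
  rw [integral_const_mul, Measure.integral_comp_smul volume (fun y => ‖f y‖),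
    finrank_euclideanSpace_fin, smul_eq_mul, ← mul_assoc, ← Real.rpow_natCast,
    ← Real.rpow_mul hl.le, ← Real.rpow_neg hl.le,
    abs_of_pos (Real.rpow_pos_of_pos hl _), ← Real.rpow_add hl]
  congr 2
  push_cast
  ring

end Rescale

theorem isBigO_pairingL2_rescaleL2 {l : ℝ} (hl : 1 ≤ l) {u f : E3 → E3} (hu : Integrable u)
    (hf : Integrable f) {Mu Mf : ℝ} (hMu : ∀ x, ‖u x‖ ≤ Mu) (hMf : ∀ x, ‖f x‖ ≤ Mf) :
    (fun n : ℤ => pairingL2 u (rescaleL2 l n f)) =O[⊤]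
      fun n : ℤ => l ^ (-(3 / 2) * |(n : ℝ)|) := by
  have hl0 : 0 < l := one_pos.trans_le hl
  have hCu : 0 ≤ Mu * ∫ x, ‖f x‖ :=
    mul_nonneg ((norm_nonneg _).trans (hMu 0)) (integral_nonneg fun _ => norm_nonneg _)
  have hCf : 0 ≤ Mf * ∫ x, ‖u x‖ :=
    mul_nonneg ((norm_nonneg _).trans (hMf 0)) (integral_nonneg fun _ => norm_nonneg _)
  refine IsBigO.of_bound ((Mu * ∫ x, ‖f x‖) + Mf * ∫ x, ‖u x‖) (.of_forall fun n => ?_)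
  rw [Real.norm_eq_abs, Real.norm_of_nonneg (Real.rpow_nonneg hl0.le _)]
  rcases le_or_gt 0 (n : ℝ) with hn | hn
  · have h := abs_pairingL2_le_of_norm_le (integrable_rescaleL2 hl0 n hf) hMu
    rw [← pairingL2_comm, integral_norm_rescaleL2 hl0] at h
    calc _ ≤ (Mu * ∫ x, ‖f x‖) * l ^ (-(3 * (n : ℝ)) / 2) := h.trans_eq (by ring)
      _ ≤ _ := by
        rw [abs_of_nonneg hn, show -(3 / 2) * (n : ℝ) = -(3 * n) / 2 by ring]
        exact mul_le_mul_of_nonneg_right (by linarith) (Real.rpow_nonneg hl0.le _)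
  · have h := abs_pairingL2_le_of_norm_le hu (norm_rescaleL2_le hl0 n hMf)
    calc _ ≤ (Mf * ∫ x, ‖u x‖) * l ^ (3 * (n : ℝ) / 2) := h.trans_eq (by ring)
      _ ≤ _ := by
        rw [abs_of_neg hn, show -(3 / 2) * -(n : ℝ) = 3 * n / 2 by ring]
        exact mul_le_mul_of_nonneg_right (by linarith) (Real.rpow_nonneg hl0.le _)

theorem isBigO_comp_add_of_isBigO_rpow_neg_mul_abs {E : Type*} [Norm E] {l s : ℝ} (hl : 1 ≤ l)
    (hs : 0 ≤ s) {P : ℤ → E} (hP : P =O[⊤] fun n : ℤ => l ^ (-s * |(n : ℝ)|)) (μ : ℤ) :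
    (fun n => P (n + μ)) =O[⊤] fun n : ℤ => l ^ (-s * |(n : ℝ)|) := by
  have hl0 : 0 < l := one_pos.trans_le hl
  refine (hP.comp_tendsto tendsto_top).trans <|
    IsBigO.of_bound (l ^ (s * |(μ : ℝ)|)) (.of_forall fun n => ?_)
  simp only [Function.comp_apply, Real.norm_of_nonneg (Real.rpow_nonneg hl0.le _)]
  rw [← Real.rpow_add hl0]
  refine Real.rpow_le_rpow_of_exponent_le hl ?_
  have h := abs_add_le ((n : ℝ) + μ) (-μ)
  rw [abs_neg, add_neg_cancel_right] at h
  push_cast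
  nlinarith

theorem summable_rpow_neg_mul_abs {l s : ℝ} (hl : 1 < l) (hs : 0 < s) :
    Summable fun n : ℤ => l ^ (-s * |(n : ℝ)|) := by
  have hl0 : 0 < l := one_pos.trans hl
  have hpow (n : ℕ) : l ^ (-s * |(n : ℝ)|) = (l ^ (-s)) ^ n := by
    rw [abs_of_nonneg n.cast_nonneg, Real.rpow_mul hl0.le, Real.rpow_natCast]
  have hgeom : Summable fun n : ℕ => (l ^ (-s)) ^ n :=
    summable_geometric_of_lt_one (Real.rpow_nonneg hl0.le _)
      (Real.rpow_lt_one_of_one_lt_of_neg hl (neg_lt_zero.mpr hs))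
  refine .of_nat_of_neg ?_ ?_ <;> refine hgeom.congr fun n => ?_ <;>
    simp only [Int.cast_neg, Int.cast_natCast, abs_neg, hpow]

theorem summable_abs_mul_rpow_mul_shifts {l : ℝ} (hl : 1 < l) {P₁ P₂ P₃ : ℤ → ℝ}
    (h₁ : P₁ =O[⊤] fun n : ℤ => l ^ (-(3 / 2) * |(n : ℝ)|))
    (h₂ : P₂ =O[⊤] fun n : ℤ => l ^ (-(3 / 2) * |(n : ℝ)|))
    (h₃ : P₃ =O[⊤] fun n : ℤ => l ^ (-(3 / 2) * |(n : ℝ)|)) (c : ℝ) (μ₁ μ₂ μ₃ : ℤ) :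
    Summable fun n : ℤ =>
      |c * l ^ (5 * (n : ℝ) / 2) * P₁ (n + μ₁) * P₂ (n + μ₂) * P₃ (n + μ₃)| := by
  have hl0 : 0 < l := one_pos.trans hl
  have hs : (0 : ℝ) ≤ 3 / 2 := by norm_num
  have hprod := (((isBigO_const_mul_self c (fun n : ℤ => l ^ (5 * (n : ℝ) / 2)) ⊤).mul
    (isBigO_comp_add_of_isBigO_rpow_neg_mul_abs hl.le hs h₁ μ₁)).mul
    (isBigO_comp_add_of_isBigO_rpow_neg_mul_abs hl.le hs h₂ μ₂)).mul
    (isBigO_comp_add_of_isBigO_rpow_neg_mul_abs hl.le hs h₃ μ₃)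
  have hexp : (fun n : ℤ => l ^ (5 * (n : ℝ) / 2) * l ^ (-(3 / 2) * |(n : ℝ)|) *
      l ^ (-(3 / 2) * |(n : ℝ)|) * l ^ (-(3 / 2) * |(n : ℝ)|)) =O[⊤]
      fun n : ℤ => l ^ (-2 * |(n : ℝ)|) := by
    refine isBigO_of_le _ fun n => ?_
    simp only [Real.norm_of_nonneg (Real.rpow_nonneg hl0.le _), ← Real.rpow_add hl0]
    refine Real.rpow_le_rpow_of_exponent_le hl.le ?_
    linarith [le_abs_self (n : ℝ)]
  exact (summable_of_isBigO (summable_rpow_neg_mul_abs hl two_pos)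
    ((hprod.trans hexp).mono le_top)).abs

theorem cascade_cancellation_general
    (l : ℝ) (hl : 1 < l)
    (ψ : Fin 4 → SchwartzMap (EuclideanSpace ℝ (Fin 3)) (EuclideanSpace ℝ (Fin 3)))
    (a : Fin 4 → Fin 4 → Fin 4 → ℤ × ℤ × ℤ → ℝ)
    (hcancel : ∀ (i : Fin 3 → Fin 4) (μ : Fin 3 → ℤ), (μ 0, μ 1, μ 2) ∈ cascadeS →
      (∑ σ : Equiv.Perm (Fin 3),
        a (i (σ 0)) (i (σ 1)) (i (σ 2)) (μ (σ 0), μ (σ 1), μ (σ 2))) = 0)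
    (u : SchwartzMap (EuclideanSpace ℝ (Fin 3)) (EuclideanSpace ℝ (Fin 3))) :
    Summable (fun n : ℤ => ∑ i₁ : Fin 4, ∑ i₂ : Fin 4, ∑ i₃ : Fin 4, ∑ μ ∈ cascadeS,
        |a i₁ i₂ i₃ μ * l ^ ((5 * (n : ℝ)) / 2) *
          pairingL2 (⇑u) (rescaleL2 l (n + μ.1) (⇑(ψ i₁))) *
          pairingL2 (⇑u) (rescaleL2 l (n + μ.2.1) (⇑(ψ i₂))) *
          pairingL2 (⇑u) (rescaleL2 l (n + μ.2.2) (⇑(ψ i₃)))|) ∧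
      (∑' n : ℤ, ∑ i₁ : Fin 4, ∑ i₂ : Fin 4, ∑ i₃ : Fin 4, ∑ μ ∈ cascadeS,
        a i₁ i₂ i₃ μ * l ^ ((5 * (n : ℝ)) / 2) *
          pairingL2 (⇑u) (rescaleL2 l (n + μ.1) (⇑(ψ i₁))) *
          pairingL2 (⇑u) (rescaleL2 l (n + μ.2.1) (⇑(ψ i₂))) *
          pairingL2 (⇑u) (rescaleL2 l (n + μ.2.2) (⇑(ψ i₃)))) = 0 := by
  have hdecay (i : Fin 4) := isBigO_pairingL2_rescaleL2 hl.le u.integrable (ψ i).integrable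
    (SchwartzMap.norm_le_seminorm ℝ u) (SchwartzMap.norm_le_seminorm ℝ (ψ i))
  refine ⟨summable_sum fun i₁ _ => summable_sum fun i₂ _ => summable_sum fun i₃ _ =>
    summable_sum fun μ _ => summable_abs_mul_rpow_mul_shifts hl (hdecay i₁) (hdecay i₂)
      (hdecay i₃) _ _ _ _, ?_⟩
  simp_rw [sum_cascade_eq_zero a hcancel fun i m => pairingL2 u (rescaleL2 l m (ψ i))]
  exact tsum_zero

/-- Fix `λ ∈ (1,2)` and Schwartz, divergence-free, `L²`-normalized vector
fields `ψ₁, …, ψ₄` with Fourier support in `Bᵢ ∪ (−Bᵢ)` for balls `Bᵢ` inside the annulus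
`{1 < |ξ| ≤ (λ+1)/2}`.  Suppose the coefficients `a` satisfy the symmetry condition
`a_{i₁,i₂,i₃,μ₁,μ₂,μ₃} = a_{i₂,i₁,i₃,μ₂,μ₁,μ₃}` and the cancellation condition
`∑_{σ ∈ Sym(3)} a_{i_{σ(1)},i_{σ(2)},i_{σ(3)},μ_{σ(1)},μ_{σ(2)},μ_{σ(3)}} = 0`.
Then for every Schwartz vector field `u` the triple series defining `⟨C(u,u), u⟩` converges
absolutely and its sum is `0`. -/
theorem cascade_cancellation
    (l : ℝ) (hl : 1 < l) (hl' : l < 2)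
    (ψ : Fin 4 → SchwartzMap (EuclideanSpace ℝ (Fin 3)) (EuclideanSpace ℝ (Fin 3)))
    (hdf : ∀ (i : Fin 4) (x : EuclideanSpace ℝ (Fin 3)),
      (∑ k : Fin 3, fderiv ℝ (⇑(ψ i)) x (EuclideanSpace.single k 1) k) = 0)
    (hnorm : ∀ i : Fin 4, eLpNorm (⇑(ψ i)) 2 volume = 1)
    (hsupp : ∀ i : Fin 4, ∃ (c : EuclideanSpace ℝ (Fin 3)) (ρ : ℝ), 0 < ρ ∧
      Metric.ball c ρ ⊆ {ξ : EuclideanSpace ℝ (Fin 3) | 1 < ‖ξ‖ ∧ ‖ξ‖ ≤ (l + 1) / 2} ∧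
      ∀ k : Fin 3, Function.support (𝓕 (fun x => ((ψ i x k : ℝ) : ℂ)))
        ⊆ Metric.ball c ρ ∪ (-(Metric.ball c ρ)))
    (a : Fin 4 → Fin 4 → Fin 4 → ℤ × ℤ × ℤ → ℝ)
    (hsymm : ∀ (i₁ i₂ i₃ : Fin 4) (μ₁ μ₂ μ₃ : ℤ), (μ₁, μ₂, μ₃) ∈ cascadeS →
      a i₁ i₂ i₃ (μ₁, μ₂, μ₃) = a i₂ i₁ i₃ (μ₂, μ₁, μ₃))
    (hcancel : ∀ (i : Fin 3 → Fin 4) (μ : Fin 3 → ℤ), (μ 0, μ 1, μ 2) ∈ cascadeS →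
      (∑ σ : Equiv.Perm (Fin 3),
        a (i (σ 0)) (i (σ 1)) (i (σ 2)) (μ (σ 0), μ (σ 1), μ (σ 2))) = 0)
    (u : SchwartzMap (EuclideanSpace ℝ (Fin 3)) (EuclideanSpace ℝ (Fin 3))) :
    Summable (fun n : ℤ => ∑ i₁ : Fin 4, ∑ i₂ : Fin 4, ∑ i₃ : Fin 4, ∑ μ ∈ cascadeS,
        |a i₁ i₂ i₃ μ * l ^ ((5 * (n : ℝ)) / 2) *
          pairingL2 (⇑u) (rescaleL2 l (n + μ.1) (⇑(ψ i₁))) *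
          pairingL2 (⇑u) (rescaleL2 l (n + μ.2.1) (⇑(ψ i₂))) *
          pairingL2 (⇑u) (rescaleL2 l (n + μ.2.2) (⇑(ψ i₃)))|) ∧
      (∑' n : ℤ, ∑ i₁ : Fin 4, ∑ i₂ : Fin 4, ∑ i₃ : Fin 4, ∑ μ ∈ cascadeS,
        a i₁ i₂ i₃ μ * l ^ ((5 * (n : ℝ)) / 2) *
          pairingL2 (⇑u) (rescaleL2 l (n + μ.1) (⇑(ψ i₁))) *
          pairingL2 (⇑u) (rescaleL2 l (n + μ.2.1) (⇑(ψ i₂))) *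
          pairingL2 (⇑u) (rescaleL2 l (n + μ.2.2) (⇑(ψ i₃)))) = 0 :=
  cascade_cancellation_general l hl ψ a hcancel u
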